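/- Let X be a metric space, F : X → 𝒫(X) an upper semicontinuous multivalued map with compact values, and N ⊆ X compact. If P = (P₁,P₂) and Q = (Q₁,Q₂) are weak index pairs in N with P₁ ⊆ Q₁ and P₂ ⊆ Q₂, then (P₁, P₁ ∩ Q₂) is a weak index pair in N. -/
import Mathlib

open Set Topology

/-- The image of a set under a multivalued map. -/
def MVImage {Y : Type*} (F : Y → Set Y) (A : Set Y) : Set Y :=
  ⋃ y ∈ A, F y

/-- Upper semicontinuity of a multivalued map: the large counter image of every
closed set is closed. -/
def IsUSC {Y : Type*} [TopologicalSpace Y] (F : Y → Set Y) : Prop :=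
  ∀ B : Set Y, IsClosed B → IsClosed {y | (F y ∩ B).Nonempty}

/-- The invariant part of `N` with respect to `F`: points admitting a full
solution (in `N`) through them. -/
def InvPart {Y : Type*} (F : Y → Set Y) (N : Set Y) : Set Y :=
  {y | ∃ σ : ℤ → Y, (∀ n : ℤ, σ n ∈ N) ∧ σ 0 = y ∧ ∀ n : ℤ, σ (n + 1) ∈ F (σ n)}

/-- The `F`-boundary of a set `A`: `cl A ∩ cl (F(A) \ A)`. -/
def FBoundary {Y : Type*} [TopologicalSpace Y] (F : Y → Set Y) (A : Set Y) : Set Y :=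
  closure A ∩ closure (MVImage F A \ A)

/-- `(P₁, P₂)` is a weak index pair for `F` in `N`. -/
structure IsWeakIndexPair {Y : Type*} [TopologicalSpace Y] (F : Y → Set Y)
    (N P₁ P₂ : Set Y) : Prop where
  compact₁ : IsCompact P₁
  compact₂ : IsCompact P₂
  subset₂₁ : P₂ ⊆ P₁
  subset₁N : P₁ ⊆ N
  mapsInto₁ : MVImage F P₁ ∩ N ⊆ P₁
  mapsInto₂ : MVImage F P₂ ∩ N ⊆ P₂
  fBoundary_subset : FBoundary F P₁ ⊆ P₂
  inv_subset : InvPart F N ⊆ interior (P₁ \ P₂)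
  diff_subset : P₁ \ P₂ ⊆ interior N

lemma mvImage_mono {Y : Type*} (F : Y → Set Y) {A B : Set Y} (h : A ⊆ B) :
    MVImage F A ⊆ MVImage F B := by
  intro x hx
  simp only [MVImage, mem_iUnion] at hx ⊢
  obtain ⟨y, hy, hxy⟩ := hx
  exact ⟨y, h hy, hxy⟩

/-- If `P ⊆ Q` are weak index pairs in `N`, then `(P₁, P₁ ∩ Q₂)` is a weak
index pair in `N`. -/
theorem weakIndexPair_fst_inter_snd {X : Type*} [MetricSpace X]
    (F : X → Set X) (hF : IsUSC F) (hFc : ∀ x, IsCompact (F x))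
    (N : Set X) (hN : IsCompact N)
    (P₁ P₂ Q₁ Q₂ : Set X)
    (hP : IsWeakIndexPair F N P₁ P₂) (hQ : IsWeakIndexPair F N Q₁ Q₂)
    (h₁ : P₁ ⊆ Q₁) (h₂ : P₂ ⊆ Q₂) :
    IsWeakIndexPair F N P₁ (P₁ ∩ Q₂) := by
  have hdiff : P₁ \ (P₁ ∩ Q₂) = P₁ \ Q₂ := by
    ext x; simp only [mem_diff, mem_inter_iff]; tauto
  constructor
  · exact hP.compact₁
  · exact hP.compact₁.inter_right hQ.compact₂.isClosed
  · exact inter_subset_left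
  · exact hP.subset₁N
  · exact hP.mapsInto₁
  · intro x hx
    constructor
    · exact hP.mapsInto₁ ⟨mvImage_mono F inter_subset_left hx.1, hx.2⟩
    · exact hQ.mapsInto₂ ⟨mvImage_mono F inter_subset_right hx.1, hx.2⟩
  · intro x hx
    refine ⟨?_, h₂ (hP.fBoundary_subset hx)⟩
    exact hP.compact₁.isClosed.closure_subset hx.1
  · rw [hdiff]
    intro x hx
    have h1 := hP.inv_subset hx
    have h2 := hQ.inv_subset hx
    have : x ∈ interior ((P₁ \ P₂) ∩ (Q₁ \ Q₂)) := by
      rw [interior_inter]; exact ⟨h1, h2⟩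
    refine interior_mono ?_ this
    intro y hy
    exact ⟨hy.1.1, hy.2.2⟩
  · rw [hdiff]
    intro x hx
    exact hP.diff_subset ⟨hx.1, fun h => hx.2 (h₂ h)⟩
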